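/- Gauge invariance of the effective affinities (Theorem 'gauge'): Let a : Fin n → ℝ and define the gauge-transformed generator W' := W * Matrix.diagonal (fun j => Real.exp (−a j)), so that W' i j = W i j * Real.exp (−a j) for all i, j. Then: (i) W' is a MJPG with W' i_μ j_μ > 0 and W' j_μ i_μ > 0 for all μ; (ii) the hidden generator of W' (obtained from W' by the same edge-removal construction) equals W_hid * Matrix.diagonal (fun j => Real.exp (−a j)); (iii) the vector p' defined by p' i := Real.exp (a i) * p i / (∑ k, Real.exp (a k) * p k) is strictly positive, sums to 1, and is annihilated by the hidden generator of W'; and (iv) the effective affinities are invariant: for every μ, Real.log (W' i_μ j_μ * p' j_μ / (W' j_μ i_μ * p' i_μ)) = Q μ. -/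

import Mathlib

/-!
The gauge transformation rescales column `j` of the generator by `e^{-a_j}`. Edge removal acts
entrywise and moves each deleted rate to the diagonal entry of its own column, so it commutes with
any column scaling, and the hidden generator of `W'` is `W_hid` with the same columns rescaled.
Tilting `p` by `e^{a}` exactly compensates this rescaling: every flux `W'_{ij} p'_j` equals
`W_{ij} p_j / Z` for one normalisation constant `Z`, so stationarity is preserved and `Z` cancels
from each affinity.
-/

open Matrix Finset Real

theorem Matrix.sum_mul_diagonal_apply {ι R : Type*} [Fintype ι] [DecidableEq ι] [Semiring R]
    (W : Matrix ι ι R) (d : ι → R) (j : ι) :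
    ∑ i, (W * diagonal d) i j = (∑ i, W i j) * d j := by
  simp only [mul_diagonal, Finset.sum_mul]

section HiddenGenerator

variable {ι κ R : Type*} [DecidableEq ι] [Fintype κ]

structure IsHiddenGenerator [AddCommMonoid R] (ei ej : κ → ι) (W H : Matrix ι ι R) : Prop where
  apply_edge : ∀ μ, H (ei μ) (ej μ) = 0
  apply_edge_symm : ∀ μ, H (ej μ) (ei μ) = 0
  apply_diag : ∀ i, H i i = W i i
    + ∑ μ ∈ univ.filter (fun μ => ej μ = i), W (ei μ) (ej μ)
    + ∑ μ ∈ univ.filter (fun μ => ei μ = i), W (ej μ) (ei μ)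
  apply_of_not_edge : ∀ i j, i ≠ j →
    (∀ μ, ¬(i = ei μ ∧ j = ej μ) ∧ ¬(i = ej μ ∧ j = ei μ)) → H i j = W i j

namespace IsHiddenGenerator

theorem unique [AddCommMonoid R] {ei ej : κ → ι} {W H₁ H₂ : Matrix ι ι R}
    (h₁ : IsHiddenGenerator ei ej W H₁) (h₂ : IsHiddenGenerator ei ej W H₂) : H₁ = H₂ := by
  ext i j
  by_cases hij : i = j
  · subst hij
    rw [h₁.apply_diag, h₂.apply_diag]
  by_cases hedge : ∀ μ, ¬(i = ei μ ∧ j = ej μ) ∧ ¬(i = ej μ ∧ j = ei μ)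
  · rw [h₁.apply_of_not_edge i j hij hedge, h₂.apply_of_not_edge i j hij hedge]
  obtain ⟨μ, hμ⟩ := not_forall.mp hedge
  rcases not_and_or.mp hμ with hfwd | hbwd
  · obtain ⟨rfl, rfl⟩ := not_not.mp hfwd
    rw [h₁.apply_edge, h₂.apply_edge]
  · obtain ⟨rfl, rfl⟩ := not_not.mp hbwd
    rw [h₁.apply_edge_symm, h₂.apply_edge_symm]

theorem mul_diagonal [Fintype ι] [Semiring R] {ei ej : κ → ι} {W H : Matrix ι ι R}
    (h : IsHiddenGenerator ei ej W H) (d : ι → R) :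
    IsHiddenGenerator ei ej (W * diagonal d) (H * diagonal d) where
  apply_edge μ := by rw [Matrix.mul_diagonal, h.apply_edge, zero_mul]
  apply_edge_symm μ := by rw [Matrix.mul_diagonal, h.apply_edge_symm, zero_mul]
  apply_diag i := by
    -- every deleted rate landing on the diagonal entry `(i, i)` comes from column `i`
    have column_eq {f : κ → R} {e : κ → ι} :
        ∑ μ ∈ univ.filter (fun μ => e μ = i), f μ * d (e μ)
          = (∑ μ ∈ univ.filter (fun μ => e μ = i), f μ) * d i := by
      rw [Finset.sum_mul]
      exact Finset.sum_congr rfl fun μ hμ => by rw [(Finset.mem_filter.mp hμ).2]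
    simp only [Matrix.mul_diagonal]
    rw [h.apply_diag, column_eq, column_eq, add_mul, add_mul]
  apply_of_not_edge i j hij hedge := by
    rw [Matrix.mul_diagonal, Matrix.mul_diagonal, h.apply_of_not_edge i j hij hedge]

end IsHiddenGenerator

end HiddenGenerator

section GaugeTilt

variable {ι : Type*} [Fintype ι]

noncomputable def gaugeTilt (a p : ι → ℝ) : ι → ℝ :=
  fun i => exp (a i) * p i / ∑ k, exp (a k) * p k

theorem sum_exp_mul_pos [Nonempty ι] (a : ι → ℝ) {p : ι → ℝ} (hp : ∀ i, 0 < p i) :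
    0 < ∑ k, exp (a k) * p k :=
  Finset.sum_pos (fun k _ => mul_pos (exp_pos _) (hp k)) univ_nonempty

theorem gaugeTilt_pos [Nonempty ι] (a : ι → ℝ) {p : ι → ℝ} (hp : ∀ i, 0 < p i) (i : ι) :
    0 < gaugeTilt a p i :=
  div_pos (mul_pos (exp_pos _) (hp i)) (sum_exp_mul_pos a hp)

theorem sum_gaugeTilt (a : ι → ℝ) {p : ι → ℝ} (hZ : ∑ k, exp (a k) * p k ≠ 0) :
    ∑ i, gaugeTilt a p i = 1 := by
  simp only [gaugeTilt, ← Finset.sum_div, div_self hZ]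

theorem exp_neg_mul_gaugeTilt (a p : ι → ℝ) (i : ι) :
    exp (-a i) * gaugeTilt a p i = p i / ∑ k, exp (a k) * p k := by
  rw [gaugeTilt, ← mul_div_assoc, ← mul_assoc, ← exp_add, neg_add_cancel, exp_zero, one_mul]

variable [DecidableEq ι]

theorem mul_diagonal_exp_neg_apply_mul_gaugeTilt (W : Matrix ι ι ℝ) (a p : ι → ℝ) (i j : ι) :
    (W * diagonal (fun j => exp (-a j))) i j * gaugeTilt a p j
      = W i j * p j / ∑ k, exp (a k) * p k := by
  rw [Matrix.mul_diagonal, mul_assoc, exp_neg_mul_gaugeTilt, mul_div_assoc]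

theorem mul_diagonal_exp_neg_mulVec_gaugeTilt (H : Matrix ι ι ℝ) (a p : ι → ℝ) :
    (H * diagonal (fun j => exp (-a j))) *ᵥ gaugeTilt a p
      = (∑ k, exp (a k) * p k)⁻¹ • (H *ᵥ p) := by
  ext i
  simp only [mulVec, dotProduct, mul_diagonal_exp_neg_apply_mul_gaugeTilt, Pi.smul_apply,
    smul_eq_mul, Finset.mul_sum, div_eq_inv_mul]

theorem flux_ratio_mul_diagonal_exp_neg_gaugeTilt (W : Matrix ι ι ℝ) (a p : ι → ℝ)
    (hZ : ∑ k, exp (a k) * p k ≠ 0) (i j : ι) :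
    (W * diagonal (fun j => exp (-a j))) i j * gaugeTilt a p j
        / ((W * diagonal (fun j => exp (-a j))) j i * gaugeTilt a p i)
      = W i j * p j / (W j i * p i) := by
  rw [mul_diagonal_exp_neg_apply_mul_gaugeTilt, mul_diagonal_exp_neg_apply_mul_gaugeTilt,
    div_div_div_cancel_right₀ hZ]

end GaugeTilt

theorem gauge_invariance_effective_affinities {n m : ℕ}
    (W Whid : Matrix (Fin n) (Fin n) ℝ)
    (hW1 : ∀ i j, i ≠ j → 0 ≤ W i j)
    (hW2 : ∀ j, ∑ i, W i j = 0)
    (ei ej : Fin m → Fin n)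
    (hpos1 : ∀ μ, 0 < W (ei μ) (ej μ))
    (hpos2 : ∀ μ, 0 < W (ej μ) (ei μ))
    (hH1 : ∀ μ, Whid (ei μ) (ej μ) = 0)
    (hH2 : ∀ μ, Whid (ej μ) (ei μ) = 0)
    (hH3 : ∀ i, Whid i i = W i i
        + ∑ μ ∈ Finset.univ.filter (fun μ => ej μ = i), W (ei μ) (ej μ)
        + ∑ μ ∈ Finset.univ.filter (fun μ => ei μ = i), W (ej μ) (ei μ))
    (hH4 : ∀ i j, i ≠ j →
      (∀ μ, ¬(i = ei μ ∧ j = ej μ) ∧ ¬(i = ej μ ∧ j = ei μ)) → Whid i j = W i j)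
    (p : Fin n → ℝ) (hp1 : ∀ i, 0 < p i) (hp2 : ∑ i, p i = 1)
    (hp3 : Whid *ᵥ p = 0)
    (Q : Fin m → ℝ)
    (hQ : ∀ μ, Q μ = Real.log (W (ei μ) (ej μ) * p (ej μ) / (W (ej μ) (ei μ) * p (ei μ))))
    (g : Fin n → ℝ) :
    ((∀ i j, i ≠ j → 0 ≤ (W * Matrix.diagonal (fun j => Real.exp (-g j))) i j) ∧
     (∀ j, ∑ i, (W * Matrix.diagonal (fun j => Real.exp (-g j))) i j = 0) ∧
     (∀ μ, 0 < (W * Matrix.diagonal (fun j => Real.exp (-g j))) (ei μ) (ej μ)) ∧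
     (∀ μ, 0 < (W * Matrix.diagonal (fun j => Real.exp (-g j))) (ej μ) (ei μ))) ∧
    (∀ Whid' : Matrix (Fin n) (Fin n) ℝ,
      (∀ μ, Whid' (ei μ) (ej μ) = 0) →
      (∀ μ, Whid' (ej μ) (ei μ) = 0) →
      (∀ i, Whid' i i = (W * Matrix.diagonal (fun j => Real.exp (-g j))) i i
        + ∑ μ ∈ Finset.univ.filter (fun μ => ej μ = i),
            (W * Matrix.diagonal (fun j => Real.exp (-g j))) (ei μ) (ej μ)
        + ∑ μ ∈ Finset.univ.filter (fun μ => ei μ = i),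
            (W * Matrix.diagonal (fun j => Real.exp (-g j))) (ej μ) (ei μ)) →
      (∀ i j, i ≠ j →
        (∀ μ, ¬(i = ei μ ∧ j = ej μ) ∧ ¬(i = ej μ ∧ j = ei μ)) →
        Whid' i j = (W * Matrix.diagonal (fun j => Real.exp (-g j))) i j) →
      Whid' = Whid * Matrix.diagonal (fun j => Real.exp (-g j))) ∧
    (∀ p' : Fin n → ℝ,
      (p' = fun i => Real.exp (g i) * p i / ∑ k, Real.exp (g k) * p k) →
      ((∀ i, 0 < p' i) ∧ (∑ i, p' i = 1) ∧
       ((Whid * Matrix.diagonal (fun j => Real.exp (-g j))) *ᵥ p' = 0) ∧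
       (∀ μ, Real.log ((W * Matrix.diagonal (fun j => Real.exp (-g j))) (ei μ) (ej μ)
            * p' (ej μ)
          / ((W * Matrix.diagonal (fun j => Real.exp (-g j))) (ej μ) (ei μ) * p' (ei μ)))
          = Q μ))) := by
  have hH : IsHiddenGenerator ei ej W Whid := ⟨hH1, hH2, hH3, hH4⟩
  have : Nonempty (Fin n) :=
    univ_nonempty_iff.mp (nonempty_of_sum_ne_zero (hp2 ▸ one_ne_zero))
  have hZ := sum_exp_mul_pos g hp1
  refine ⟨⟨fun i j hij => ?_, fun j => ?_, fun μ => ?_, fun μ => ?_⟩, ?_, ?_⟩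
  · rw [mul_diagonal]; exact mul_nonneg (hW1 i j hij) (exp_pos _).le
  · rw [sum_mul_diagonal_apply, hW2, zero_mul]
  · rw [mul_diagonal]; exact mul_pos (hpos1 μ) (exp_pos _)
  · rw [mul_diagonal]; exact mul_pos (hpos2 μ) (exp_pos _)
  · intro Whid' h1 h2 h3 h4
    exact IsHiddenGenerator.unique ⟨h1, h2, h3, h4⟩ (hH.mul_diagonal _)
  · intro p' hp'
    obtain rfl : p' = gaugeTilt g p := hp'
    refine ⟨gaugeTilt_pos g hp1, sum_gaugeTilt g hZ.ne', ?_, fun μ => ?_⟩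
    · rw [mul_diagonal_exp_neg_mulVec_gaugeTilt, hp3, smul_zero]
    · rw [flux_ratio_mul_diagonal_exp_neg_gaugeTilt W g p hZ.ne', hQ]
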